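/- Consider the L1-TV functional on two points: E(x_1, x_2) = α|x_1 − x_2| + w_1|x_1 − y_1| + w_2|x_2 − y_2| with y_1, y_2 ∈ ℝ, w_1, w_2 ≥ 0, α > 0. Then E attains its global minimum at some point (x_1, x_2) with x_1, x_2 ∈ {y_1, y_2}, and min over ℝ² of E equals min(E(y_1,y_1), E(y_2,y_2), E(y_1,y_2), E(y_2,y_1)). -/
import Mathlib


/-- The `N = 2` case of the search-space reduction for real-valued `L¹`-TV: the functional
`E(x₁,x₂) = α|x₁-x₂| + w₁|x₁-y₁| + w₂|x₂-y₂|` attains its global minimum over `ℝ²` at a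
point with both coordinates in `{y₁, y₂}`, and the minimum equals
`min(E(y₁,y₁), E(y₂,y₂), E(y₁,y₂), E(y₂,y₁))`. -/
theorem l1tv_two_point_reduction
    (y₁ y₂ w₁ w₂ α : ℝ) (hw₁ : 0 ≤ w₁) (hw₂ : 0 ≤ w₂) (hα : 0 < α)
    (E : ℝ × ℝ → ℝ)
    (hE : ∀ p : ℝ × ℝ, E p = α * |p.1 - p.2| + w₁ * |p.1 - y₁| + w₂ * |p.2 - y₂|) :
    (∃ p : ℝ × ℝ, (p.1 = y₁ ∨ p.1 = y₂) ∧ (p.2 = y₁ ∨ p.2 = y₂) ∧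
      ∀ q : ℝ × ℝ, E p ≤ E q) ∧
    (∀ q : ℝ × ℝ,
      min (min (E (y₁, y₁)) (E (y₂, y₂))) (min (E (y₁, y₂)) (E (y₂, y₁))) ≤ E q) := by
  have e11 : E (y₁, y₁) = w₂ * |y₁ - y₂| := by rw [hE]; simp
  have e22 : E (y₂, y₂) = w₁ * |y₂ - y₁| := by rw [hE]; simp
  have e12 : E (y₁, y₂) = α * |y₁ - y₂| := by rw [hE]; simp
  have hd21 : |y₂ - y₁| = |y₁ - y₂| := abs_sub_comm _ _
  have key : ∀ q : ℝ × ℝ,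
      min (min (E (y₁, y₁)) (E (y₂, y₂))) (min (E (y₁, y₂)) (E (y₂, y₁))) ≤ E q := by
    intro q
    set m := min (min (E (y₁, y₁)) (E (y₂, y₂))) (min (E (y₁, y₂)) (E (y₂, y₁))) with hm
    have hm1 : m ≤ w₂ * |y₁ - y₂| := e11 ▸ le_trans (min_le_left _ _) (min_le_left _ _)
    have hm2 : m ≤ w₁ * |y₁ - y₂| := by
      have : m ≤ E (y₂, y₂) := le_trans (min_le_left _ _) (min_le_right _ _)
      rw [e22, hd21] at this; exact this
    have hm3 : m ≤ α * |y₁ - y₂| := e12 ▸ le_trans (min_le_right _ _) (min_le_left _ _)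
    rw [hE]
    have hA : (0:ℝ) ≤ |q.1 - q.2| := abs_nonneg _
    have hB : (0:ℝ) ≤ |q.1 - y₁| := abs_nonneg _
    have hC : (0:ℝ) ≤ |q.2 - y₂| := abs_nonneg _
    have tri : |y₁ - y₂| ≤ |q.1 - q.2| + |q.1 - y₁| + |q.2 - y₂| := by
      have t1 : |y₁ - y₂| ≤ |y₁ - q.1| + |q.1 - y₂| := abs_sub_le _ _ _
      have t2 : |q.1 - y₂| ≤ |q.1 - q.2| + |q.2 - y₂| := abs_sub_le _ _ _
      have t3 : |y₁ - q.1| = |q.1 - y₁| := abs_sub_comm _ _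
      linarith
    rcases le_total α w₁ with h1 | h1
    · rcases le_total α w₂ with h2 | h2
      · nlinarith [mul_le_mul_of_nonneg_left tri hα.le]
      · rcases le_total w₂ w₁ with h3 | h3
        · nlinarith [mul_le_mul_of_nonneg_left tri hw₂]
        · nlinarith [mul_le_mul_of_nonneg_left tri hw₂]
    · rcases le_total w₁ w₂ with h2 | h2
      · nlinarith [mul_le_mul_of_nonneg_left tri hw₁]
      · nlinarith [mul_le_mul_of_nonneg_left tri hw₂]
  refine ⟨?_, key⟩
  rcases le_total (E (y₁, y₁)) (E (y₂, y₂)) with h1 | h1 <;>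
    rcases le_total (E (y₁, y₂)) (E (y₂, y₁)) with h2 | h2
  · rcases le_total (E (y₁, y₁)) (E (y₁, y₂)) with h3 | h3
    · exact ⟨(y₁, y₁), Or.inl rfl, Or.inl rfl, fun q => le_trans
        (by simp only [le_min_iff]; exact ⟨⟨le_rfl, h1⟩, h3, by linarith⟩) (key q)⟩
    · exact ⟨(y₁, y₂), Or.inl rfl, Or.inr rfl, fun q => le_trans
        (by simp only [le_min_iff]; exact ⟨⟨h3, by linarith⟩, le_rfl, h2⟩) (key q)⟩
  · rcases le_total (E (y₁, y₁)) (E (y₂, y₁)) with h3 | h3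
    · exact ⟨(y₁, y₁), Or.inl rfl, Or.inl rfl, fun q => le_trans
        (by simp only [le_min_iff]; exact ⟨⟨le_rfl, h1⟩, by linarith, h3⟩) (key q)⟩
    · exact ⟨(y₂, y₁), Or.inr rfl, Or.inl rfl, fun q => le_trans
        (by simp only [le_min_iff]; exact ⟨⟨h3, by linarith⟩, by linarith, le_rfl⟩) (key q)⟩
  · rcases le_total (E (y₂, y₂)) (E (y₁, y₂)) with h3 | h3
    · exact ⟨(y₂, y₂), Or.inr rfl, Or.inr rfl, fun q => le_trans
        (by simp only [le_min_iff]; exact ⟨⟨h1, le_rfl⟩, h3, by linarith⟩) (key q)⟩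
    · exact ⟨(y₁, y₂), Or.inl rfl, Or.inr rfl, fun q => le_trans
        (by simp only [le_min_iff]; exact ⟨⟨by linarith, h3⟩, le_rfl, h2⟩) (key q)⟩
  · rcases le_total (E (y₂, y₂)) (E (y₂, y₁)) with h3 | h3
    · exact ⟨(y₂, y₂), Or.inr rfl, Or.inr rfl, fun q => le_trans
        (by simp only [le_min_iff]; exact ⟨⟨h1, le_rfl⟩, by linarith, h3⟩) (key q)⟩
    · exact ⟨(y₂, y₁), Or.inr rfl, Or.inl rfl, fun q => le_trans
        (by simp only [le_min_iff]; exact ⟨⟨by linarith, h3⟩, by linarith, le_rfl⟩) (key q)⟩
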